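/- For any CM-type Φ of K, the map ρ_Φ : G → Ind ⋊ G₀ given by τ ↦ (r_Φ(τ), ρ(τ)) is an injective group homomorphism, where ρ : G → G₀ is the canonical epimorphism and Ind ⋊ G₀ is the semidirect product with multiplication (f, σ)(f′, σ′) = (f + σ·f′, σσ′). -/

import Mathlib

/- Common combinatorial skeleton for the Galois-theoretic setting of the paper:
`G = Gal(K^c/ℚ)`, `H = Gal(K^c/K)`, `H₀ = Gal(K^c/K₀)`, `ι` the complex conjugation.
Embeddings `K ↪ ℂ` correspond to left cosets `G ⧸ H`, embeddings `K₀ ↪ ℂ` to `G ⧸ H₀`. -/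

open Pointwise

variable {G : Type} [Group G]

/-- A CM-type of `K`: a set `Φ` of embeddings `K ↪ ℂ` (i.e. of cosets in `G ⧸ H`) such that
`Φ` and `ιΦ` are disjoint and every embedding lies in `Φ ∪ ιΦ`. -/
def IsCMType (H : Subgroup G) (ι : G) (Φ : Set (G ⧸ H)) : Prop :=
  (∀ φ ∈ Φ, ι • φ ∉ Φ) ∧ ∀ φ : G ⧸ H, φ ∈ Φ ∨ ι • φ ∈ Φ

/-- `S_Φ = ⋃_{φ ∈ Φ} φH ⊆ G`. -/
def SPhi (H : Subgroup G) (Φ : Set (G ⧸ H)) : Set G := {g : G | (g : G ⧸ H) ∈ Φ}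

/-- `H̃(Φ) = {σ ∈ G : σ S_Φ = S_Φ}`. -/
def Htilde (H : Subgroup G) (Φ : Set (G ⧸ H)) : Subgroup G := MulAction.stabilizer G (SPhi H Φ)

/-- The natural projection `G ⧸ H → G ⧸ H₀` (restriction of embeddings of `K` to `K₀`). -/
def proj (H H₀ : Subgroup G) (h : H ≤ H₀) : G ⧸ H → G ⧸ H₀ :=
  Quotient.map' id fun a b hab => by
    rw [QuotientGroup.leftRel_apply] at *
    exact h hab

open Classical in
/-- The 1-cocycle `r_Φ : G → Ind`, `r_Φ(τ)(φᵢH₀) = 0` iff `τ⁻¹φᵢ ∈ Φ`, where `φᵢ` is the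
unique member of `Φ` lying over the coset `φᵢH₀`. -/
noncomputable def rPhi (H H₀ : Subgroup G) (h : H ≤ H₀) (Φ : Set (G ⧸ H)) (τ : G) :
    (G ⧸ H₀) → ZMod 2 :=
  fun x => if ∃ φ ∈ Φ, proj H H₀ h φ = x ∧ τ⁻¹ • φ ∈ Φ then 0 else 1

/-- The action of `G` on `Ind = Map(G/H₀, ℤ/2ℤ)`, `(σ·f)(τH₀) = f(σ⁻¹τH₀)`. -/
def indAct (H₀ : Subgroup G) (σ : G) (f : (G ⧸ H₀) → ZMod 2) : (G ⧸ H₀) → ZMod 2 :=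
  fun x => f (σ⁻¹ • x)

/-- For `f ∈ Ind`, the CM-type `Φ_f = {ι^{f(φ₁H₀)}φ₁, …, ι^{f(φ_NH₀)}φ_N}` attached to a fixed
CM-type `Φ₀`. -/
noncomputable def PhiF (H H₀ : Subgroup G) (h : H ≤ H₀) (ι : G) (Φ₀ : Set (G ⧸ H))
    (f : (G ⧸ H₀) → ZMod 2) : Set (G ⧸ H) :=
  (fun φ => ι ^ (f (proj H H₀ h φ)).val • φ) '' Φ₀

/-- The `*`-action of `G` on `Ind`: `τ * f := r_{Φ₀}(τ) + τ·f`. -/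
noncomputable def starAct (H H₀ : Subgroup G) (h : H ≤ H₀) (Φ₀ : Set (G ⧸ H)) (τ : G)
    (f : (G ⧸ H₀) → ZMod 2) : (G ⧸ H₀) → ZMod 2 :=
  rPhi H H₀ h Φ₀ τ + indAct H₀ τ f

/- Put `χ(ψ) = 0` or `1` according as the embedding `ψ` lies in `Φ` or not. The CM condition
gives `χ(ιψ) = χ(ψ) + 1`, and the embeddings over `ψH₀` are exactly `ψ` and `ιψ`; hence
`r_Φ(τ)(ψH₀) = χ(ψ) + χ(τ⁻¹ψ)` for every `ψ`, and the cocycle identity telescopes in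
characteristic 2. If `τ₁, τ₂` have the same image, `σ = τ₁⁻¹τ₂` preserves every fibre `{ψ, ιψ}`
and the value of `χ`, so it fixes every embedding and lies in the normal core of `H`. -/

section CMType

variable {H H₀ : Subgroup G} (hle : H ≤ H₀) {ι : G}

lemma proj_surjective : Function.Surjective (proj H H₀ hle) := by
  rintro ⟨g⟩
  exact ⟨g, rfl⟩

lemma proj_smul (g : G) (φ : G ⧸ H) : proj H H₀ hle (g • φ) = g • proj H H₀ hle φ := by
  induction φ using QuotientGroup.induction_on
  rfl

lemma proj_smul_of_mem_normalCore {σ : G} (hσ : σ ∈ H₀.normalCore) (φ : G ⧸ H) :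
    proj H H₀ hle (σ • φ) = proj H H₀ hle φ := by
  rw [Subgroup.normalCore_eq_ker] at hσ
  rw [proj_smul]
  exact congr($hσ (proj H H₀ hle φ))

lemma proj_smul_of_mem_center (hι : ι ∈ Subgroup.center G) (hιH₀ : ι ∈ H₀) (φ : G ⧸ H) :
    proj H H₀ hle (ι • φ) = proj H H₀ hle φ := by
  induction φ using QuotientGroup.induction_on with
  | H g =>
    change ((ι * g : G) : G ⧸ H₀) = g
    rw [QuotientGroup.eq, mul_inv_rev, mul_assoc,
      ← Subgroup.mem_center_iff.mp (inv_mem hι), inv_mul_cancel_left]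
    exact inv_mem hιH₀

lemma eq_or_eq_smul_of_proj_eq (hι : ι ∈ Subgroup.center G)
    (hcosets : ∀ g ∈ H₀, g ∈ H ∨ ι * g ∈ H) {φ ψ : G ⧸ H}
    (h : proj H H₀ hle ψ = proj H H₀ hle φ) : ψ = φ ∨ ψ = ι • φ := by
  induction φ using QuotientGroup.induction_on with
  | H b =>
  induction ψ using QuotientGroup.induction_on with
  | H a =>
  refine (hcosets _ (QuotientGroup.eq.mp h)).imp QuotientGroup.eq.mpr fun h' => ?_
  change (a : G ⧸ H) = (ι * b : G)
  rwa [QuotientGroup.eq, ← mul_assoc, Subgroup.mem_center_iff.mp hι, mul_assoc]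

lemma smul_comm_of_mem_center (hι : ι ∈ Subgroup.center G) (g : G) (φ : G ⧸ H) :
    g • ι • φ = ι • g • φ := by
  rw [smul_smul, smul_smul, Subgroup.mem_center_iff.mp hι]

namespace IsCMType

variable {Φ : Set (G ⧸ H)} (hΦ : IsCMType H ι Φ)
include hΦ

lemma smul_mem_iff (φ : G ⧸ H) : ι • φ ∈ Φ ↔ φ ∉ Φ :=
  ⟨fun h hφ => hΦ.1 φ hφ h, (hΦ.2 φ).resolve_left⟩

lemma eq_of_proj_eq (hι : ι ∈ Subgroup.center G) (hcosets : ∀ g ∈ H₀, g ∈ H ∨ ι * g ∈ H)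
    {φ ψ : G ⧸ H} (h : proj H H₀ hle ψ = proj H H₀ hle φ) (hmem : ψ ∈ Φ ↔ φ ∈ Φ) : ψ = φ := by
  refine (eq_or_eq_smul_of_proj_eq hle hι hcosets h).resolve_right ?_
  rintro rfl
  exact iff_not_self (hmem.symm.trans (hΦ.smul_mem_iff φ))

lemma indicator_compl_smul (ψ : G ⧸ H) :
    (Φᶜ.indicator 1 (ι • ψ) : ZMod 2) = Φᶜ.indicator 1 ψ + 1 := by
  by_cases hψ : ψ ∈ Φ <;> simp [hΦ.smul_mem_iff, hψ]
  decide

lemma rPhi_proj_of_mem (hι : ι ∈ Subgroup.center G) (hcosets : ∀ g ∈ H₀, g ∈ H ∨ ι * g ∈ H)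
    (τ : G) {φ : G ⧸ H} (hφ : φ ∈ Φ) :
    rPhi H H₀ hle Φ τ (proj H H₀ hle φ) = Φᶜ.indicator 1 (τ⁻¹ • φ) := by
  have hwitness : (∃ φ' ∈ Φ, proj H H₀ hle φ' = proj H H₀ hle φ ∧ τ⁻¹ • φ' ∈ Φ) ↔ τ⁻¹ • φ ∈ Φ :=
    ⟨fun ⟨_, hφ', hproj, hτ⟩ => hΦ.eq_of_proj_eq hle hι hcosets hproj (iff_of_true hφ' hφ) ▸ hτ,
      fun h => ⟨φ, hφ, rfl, h⟩⟩
  unfold rPhi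
  by_cases h : τ⁻¹ • φ ∈ Φ
  · rw [if_pos (hwitness.mpr h), Set.indicator_of_notMem (Set.notMem_compl_iff.mpr h)]
  · rw [if_neg (mt hwitness.mp h), Set.indicator_of_mem (Set.mem_compl h)]
    rfl

lemma rPhi_proj (hι : ι ∈ Subgroup.center G) (hιH₀ : ι ∈ H₀)
    (hcosets : ∀ g ∈ H₀, g ∈ H ∨ ι * g ∈ H) (τ : G) (ψ : G ⧸ H) :
    rPhi H H₀ hle Φ τ (proj H H₀ hle ψ) = Φᶜ.indicator 1 ψ + Φᶜ.indicator 1 (τ⁻¹ • ψ) := by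
  rcases hΦ.2 ψ with hψ | hψ
  · rw [hΦ.rPhi_proj_of_mem hle hι hcosets τ hψ,
      Set.indicator_of_notMem (Set.notMem_compl_iff.mpr hψ), zero_add]
  · rw [← proj_smul_of_mem_center hle hι hιH₀, hΦ.rPhi_proj_of_mem hle hι hcosets τ hψ,
      smul_comm_of_mem_center hι, hΦ.indicator_compl_smul,
      Set.indicator_of_mem (Set.mem_compl ((hΦ.smul_mem_iff ψ).mp hψ)), add_comm]
    rfl

lemma rPhi_mul (hι : ι ∈ Subgroup.center G) (hιH₀ : ι ∈ H₀)
    (hcosets : ∀ g ∈ H₀, g ∈ H ∨ ι * g ∈ H) (τ₁ τ₂ : G) :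
    rPhi H H₀ hle Φ (τ₁ * τ₂) = rPhi H H₀ hle Φ τ₁ + indAct H₀ τ₁ (rPhi H H₀ hle Φ τ₂) := by
  funext x
  obtain ⟨ψ, rfl⟩ := proj_surjective hle x
  simp only [Pi.add_apply, indAct, ← proj_smul, hΦ.rPhi_proj hle hι hιH₀ hcosets, mul_inv_rev,
    mul_smul]
  rw [add_assoc, ← add_assoc (Φᶜ.indicator 1 (τ₁⁻¹ • ψ)), CharTwo.add_self_eq_zero, zero_add]

lemma mem_normalCore_of_rPhi_eq (hι : ι ∈ Subgroup.center G) (hιH₀ : ι ∈ H₀)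
    (hcosets : ∀ g ∈ H₀, g ∈ H ∨ ι * g ∈ H) {τ₁ τ₂ : G}
    (hr : rPhi H H₀ hle Φ τ₁ = rPhi H H₀ hle Φ τ₂) (hτ : τ₁⁻¹ * τ₂ ∈ H₀.normalCore) :
    τ₁⁻¹ * τ₂ ∈ H.normalCore := by
  rw [Subgroup.normalCore_eq_ker, MonoidHom.mem_ker]
  ext ψ
  change (τ₁⁻¹ * τ₂) • ψ = ψ
  have hχ : (Φᶜ.indicator 1 ((τ₁⁻¹ * τ₂) • ψ) : ZMod 2) = Φᶜ.indicator 1 ψ := by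
    have := congrFun hr (proj H H₀ hle (τ₂ • ψ))
    simp only [hΦ.rPhi_proj hle hι hιH₀ hcosets, inv_smul_smul, add_right_inj] at this
    rwa [mul_smul]
  have hmem : (τ₁⁻¹ * τ₂) • ψ ∈ Φ ↔ ψ ∈ Φ := by
    by_cases h₁ : (τ₁⁻¹ * τ₂) • ψ ∈ Φ <;> by_cases h₂ : ψ ∈ Φ <;> simp_all
  exact hΦ.eq_of_proj_eq hle hι hcosets (proj_smul_of_mem_normalCore hle hτ ψ) hmem

end IsCMType

end CMType

theorem rhoPhi_injective_hom_general
    {G : Type} [Group G] (H H₀ : Subgroup G) (hle : H ≤ H₀) (ι : G)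
    (hcent : ∀ g : G, g * ι = ι * g)
    (hιH₀ : ι ∈ H₀)
    (hcosets : ∀ g : G, g ∈ H₀ ↔ g ∈ H ∨ ι * g ∈ H)
    (hfaithful : H.normalCore = ⊥)
    (Φ : Set (G ⧸ H)) (hΦ : IsCMType H ι Φ) :
    Function.Injective
        (fun τ : G =>
          ((rPhi H H₀ hle Φ τ, (τ : G ⧸ H₀.normalCore)) :
            ((G ⧸ H₀) → ZMod 2) × (G ⧸ H₀.normalCore))) ∧
    (∀ τ₁ τ₂ : G,
        rPhi H H₀ hle Φ (τ₁ * τ₂) = rPhi H H₀ hle Φ τ₁ + indAct H₀ τ₁ (rPhi H H₀ hle Φ τ₂)) := by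
  have hι : ι ∈ Subgroup.center G := Subgroup.mem_center_iff.mpr hcent
  have hcosets' : ∀ g ∈ H₀, g ∈ H ∨ ι * g ∈ H := fun g => (hcosets g).mp
  refine ⟨fun τ₁ τ₂ h => ?_, hΦ.rPhi_mul hle hι hιH₀ hcosets'⟩
  obtain ⟨hr, hq⟩ := Prod.mk.inj h
  have hτ := hΦ.mem_normalCore_of_rPhi_eq hle hι hιH₀ hcosets' hr (QuotientGroup.eq.mp hq)
  rw [hfaithful, Subgroup.mem_bot, inv_mul_eq_one] at hτ
  exact hτ

/-- For any CM-type `Φ` of `K`, the map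
`ρ_Φ : G → Ind ⋊ G₀`, `τ ↦ (r_Φ(τ), ρ(τ))` (with `ρ : G → G₀ = G/C` the canonical epimorphism
and `C = Gal(K^c/K₀^c) = ⋂_τ τH₀τ⁻¹` the normal core of `H₀`) is an injective group
homomorphism for the semidirect multiplication `(f, σ)(f′, σ′) = (f + σ·f′, σσ′)`. -/
theorem rhoPhi_injective_hom
    {G : Type} [Group G] [Finite G] (H H₀ : Subgroup G) (hle : H ≤ H₀) (ι : G)
    (hι2 : ι * ι = 1) (hι1 : ι ≠ 1) (hcent : ∀ g : G, g * ι = ι * g)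
    (hιH : ι ∉ H) (hιH₀ : ι ∈ H₀)
    (hcosets : ∀ g : G, g ∈ H₀ ↔ g ∈ H ∨ ι * g ∈ H)
    (hfaithful : H.normalCore = ⊥)
    (Φ : Set (G ⧸ H)) (hΦ : IsCMType H ι Φ) :
    Function.Injective
        (fun τ : G =>
          ((rPhi H H₀ hle Φ τ, (τ : G ⧸ H₀.normalCore)) :
            ((G ⧸ H₀) → ZMod 2) × (G ⧸ H₀.normalCore))) ∧
    (∀ τ₁ τ₂ : G,
        rPhi H H₀ hle Φ (τ₁ * τ₂) = rPhi H H₀ hle Φ τ₁ + indAct H₀ τ₁ (rPhi H H₀ hle Φ τ₂)) :=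
  rhoPhi_injective_hom_general H H₀ hle ι hcent hιH₀ hcosets hfaithful Φ hΦ
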